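/- arXiv:2104.14765 — 2 statements merged into one kernel-verified Lean document; each statement's English description precedes it below -/
import Mathlib

section
/- Let p be an odd prime, and assume D is a p-group and I is nontrivial, with the decomposition I = I_1 × ⋯ × I_s chosen so that every I_l is a nontrivial cyclic group (so s is the p-rank of I). Let G' be the maximal subgroup of G of order prime to p, and let ψ : G → \bar{ℚ}_p^× be a group character such that ψ restricted to G' is injective and ψ is nontrivial on D; let O_ψ = ℤ_p[ψ(G)] and let ψ also denote the induced ring homomorphism ℤ_p[G] → O_ψ. Then one has the equality of ideals of O_ψ: (ψ(#I·ν_I)) + ψ(#I − ν_I·φ̃^{-1})·ψ(𝓙)·O_ψ = (ψ(𝓘_D)·O_ψ)^{s−1}·(ψ(#I − ν_I·φ̃^{-1})). (This is Lemma 5.2(2) of the paper, ψ(𝓐) = ψ(𝓘_D)^{s−1}·ψ(𝓑) for 𝓐 = h·SFitt¹_{ℤ_p[G]}(A⊗ℤ_p) and 𝓑 = (1 − (ν_I/#I)φ^{-1}), with 𝓐 expressed via Theorem 1.3 and denominators cleared by multiplying by #I.) -/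
/-!
Let `K = ψ(𝓘_D)`; it is generated by the `ψ(d) - 1`, `d ∈ D`. Since `ψ` is nontrivial on the
`p`-group `D`, some `ψ(d) - 1 ≠ 0` divides `p`, so `p ∈ K`. Each `I_l` is a nontrivial `p`-group,
so `ψ(ν_l)` is `0` or `#I_l ∈ pℤ`; either way `ψ(ν_l) ∈ K`. Hence every generator of `Z_i` maps
into `K^{s-i}`, while `Z_s ∋ 1`, so `ψ(𝓙) = K^{s-1}`; likewise `#I = ∏ #I_l ∈ K^s`.

If `ψ` is nontrivial on `I`, then `ψ(ν_I) = 0` and both sides are `#I · K^{s-1}`. If `ψ` is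
trivial on `I`, it factors through the cyclic group `D/I` generated by `φ`, so `K = (b)` with
`b = 1 - ψ(φ̃)⁻¹`, and `ψ(ν_I) = #I`; both sides become `(#I · b^s)`, the summand `(#I²)` being
absorbed because `b^s ∣ #I`.
-/

open MonoidAlgebra Finset

/-- The sum `ν_H = Σ_{σ ∈ H} σ` of the elements of a subgroup `H` in the group algebra. -/
noncomputable def nuElt (R : Type) [CommRing R] {G : Type} [CommGroup G] [Fintype G]
    (H : Subgroup G) : MonoidAlgebra R G :=
  letI := Classical.decPred (· ∈ H)
  ∑ σ ∈ Finset.univ.filter (· ∈ H), MonoidAlgebra.of R G σ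

/-- `I = I_1 × ⋯ × I_s` where `I_l` is the cyclic subgroup generated by `σ l`:
every element of `I` is, in a unique way, the product of elements of the subgroups
`⟨σ l⟩`. -/
def IsDecomp {G : Type} [CommGroup G] (I : Subgroup G) {s : ℕ} (σ : Fin s → G) : Prop :=
  (∀ l, σ l ∈ I) ∧
    ∀ g ∈ I, ∃! x : ∀ l, Subgroup.zpowers (σ l), (∏ l, ((x l : G))) = g

/-- The ideal `Z_i ⊆ R[G]` generated by the products `ν_{l_1} ⋯ ν_{l_{s-i}}` over all
`(s-i)`-element subsets `{l_1 < ⋯ < l_{s-i}}` of `{1, …, s}`. -/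
noncomputable def ZidealR (R : Type) [CommRing R] {G : Type} [CommGroup G] [Fintype G]
    {s : ℕ} (σ : Fin s → G) (i : ℕ) : Ideal (MonoidAlgebra R G) :=
  Ideal.span {x | ∃ T : Finset (Fin s), T.card = s - i ∧
    x = ∏ l ∈ T, nuElt R (Subgroup.zpowers (σ l))}

/-- The ideal `𝓘_H = ker(R[G] → R[G/H])`. -/
noncomputable def kerIdealR (R : Type) [CommRing R] {G : Type} [CommGroup G] [Fintype G]
    (H : Subgroup G) : Ideal (MonoidAlgebra R G) :=
  RingHom.ker (MonoidAlgebra.mapDomainRingHom R (QuotientGroup.mk' H))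

section

variable {O : Type} [CommRing O] [IsDomain O]

theorem sub_one_dvd_prime_of_pow_prime_pow_eq_one {p : ℕ} (hp : p.Prime) {u : O} {k : ℕ}
    (hu : u ^ p ^ k = 1) (hu1 : u ≠ 1) : u - 1 ∣ (p : O) := by
  obtain ⟨m, -, hm⟩ := (Nat.dvd_prime_pow hp).mp (orderOf_dvd_of_pow_eq_one hu)
  obtain ⟨n, rfl⟩ : ∃ n, m = n + 1 := by
    refine Nat.exists_eq_succ_of_ne_zero ?_
    rintro rfl
    exact hu1 (orderOf_eq_one_iff.mp (by simpa using hm))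
  have hvp : (u ^ p ^ n) ^ p = 1 := by rw [← pow_mul, ← pow_succ, ← hm, pow_orderOf_eq_one]
  have hv1 : u ^ p ^ n ≠ 1 := fun h => by
    have := (Nat.pow_dvd_pow_iff_le_right hp.one_lt).mp (hm ▸ orderOf_dvd_of_pow_eq_one h)
    omega
  exact (sub_one_dvd_pow_sub_one u _).trans (sub_one_dvd_natCast_of_pow_eq_one hvp hv1)

theorem IsPGroup.sub_one_dvd_prime {G : Type} [Group G] {p : ℕ} [hp : Fact p.Prime]
    {D : Subgroup G} (hD : IsPGroup p D) (χ : G →* O) {d : G} (hd : d ∈ D) (hχd : χ d ≠ 1) :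
    χ d - 1 ∣ (p : O) := by
  obtain ⟨k, hk⟩ := hD ⟨d, hd⟩
  refine sub_one_dvd_prime_of_pow_prime_pow_eq_one (k := k) hp.out ?_ hχd
  rw [← map_pow, show d ^ p ^ k = 1 from congrArg Subtype.val hk, map_one]

end

theorem IsPGroup.natCast_orderOf_mem {G : Type} [Group G] {p : ℕ} [Fact p.Prime]
    {D : Subgroup G} (hD : IsPGroup p D) {R : Type} [CommRing R] {K : Ideal R}
    (hpK : (p : R) ∈ K) {g : G} (hg : g ∈ D) (hg1 : g ≠ 1) : (orderOf g : R) ∈ K := by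
  obtain ⟨c, hc⟩ := hD.dvd_orderOf (g := ⟨g, hg⟩) (by simpa using hg1)
  rw [Subgroup.orderOf_mk] at hc
  rw [hc, Nat.cast_mul]
  exact K.mul_mem_right _ hpK

theorem span_mul_self_add_span_mul_pow_eq {R : Type} [CommRing R] {b c : R} {s : ℕ} (hs : s ≠ 0)
    (hbc : b ^ s ∣ c) :
    Ideal.span {c * c} + Ideal.span {c * b} * Ideal.span {b} ^ (s - 1)
      = Ideal.span {b} ^ (s - 1) * Ideal.span {c * b} := by
  rw [Ideal.span_singleton_pow, Ideal.span_singleton_mul_span_singleton,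
    Ideal.span_singleton_mul_span_singleton, mul_comm (b ^ (s - 1)), Submodule.add_eq_sup,
    sup_eq_right, Ideal.span_singleton_le_span_singleton, mul_assoc, ← pow_succ',
    Nat.sub_add_cancel (Nat.one_le_iff_ne_zero.mpr hs)]
  exact mul_dvd_mul_left _ hbc

section

variable {R O : Type} [CommRing R] [CommRing O] [Algebra R O] {G : Type} [CommGroup G] [Fintype G]

open Classical in
theorem lift_nuElt (χ : G →* O) (H : Subgroup G) :
    MonoidAlgebra.lift R O G χ (nuElt R H) = ∑ h : H, χ h := by
  rw [nuElt, map_sum]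
  simp only [MonoidAlgebra.lift_of]
  exact Finset.sum_subtype _ (by simp) _

theorem lift_nuElt_eq_zero [IsDomain O] (χ : G →* O) {H : Subgroup G} (h : ∃ g ∈ H, χ g ≠ 1) :
    MonoidAlgebra.lift R O G χ (nuElt R H) = 0 := by
  classical
  obtain ⟨g, hg, hχg⟩ := h
  rw [lift_nuElt]
  refine sum_hom_units_eq_zero (χ.comp H.subtype) fun h => hχg ?_
  simpa using DFunLike.congr_fun h ⟨g, hg⟩

theorem lift_nuElt_eq_card (χ : G →* O) {H : Subgroup G} (h : ∀ g ∈ H, χ g = 1) :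
    MonoidAlgebra.lift R O G χ (nuElt R H) = Nat.card H := by
  classical
  have hH : ∀ g : H, χ g = 1 := fun g => h g g.2
  simp [lift_nuElt, hH, Nat.card_eq_fintype_card]

theorem lift_nuElt_mem [IsDomain O] (χ : G →* O) (H : Subgroup G) {K : Ideal O}
    (hK : (Nat.card H : O) ∈ K) : MonoidAlgebra.lift R O G χ (nuElt R H) ∈ K := by
  by_cases h : ∀ g ∈ H, χ g = 1
  · rwa [lift_nuElt_eq_card χ h]
  · push Not at h
    rw [lift_nuElt_eq_zero χ h]
    exact K.zero_mem

theorem map_lift_kerIdealR (χ : G →* O) (D : Subgroup G) :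
    (kerIdealR R D).map (MonoidAlgebra.lift R O G χ).toRingHom
      = Ideal.span ((fun d => χ d - 1) '' D) := by
  set J := Ideal.span ((fun d => χ d - 1) '' (D : Set G))
  apply le_antisymm
  · -- `χ` is trivial on `D` modulo `J`, so `lift χ` modulo `J` factors through `R[G/D]`.
    have hD : D ≤ ((Ideal.Quotient.mk J : O →* O ⧸ J).comp χ).ker := fun d hd => by
      rw [MonoidHom.mem_ker, MonoidHom.comp_apply, MonoidHom.coe_coe,
        ← map_one (Ideal.Quotient.mk J), Ideal.Quotient.eq]
      exact Ideal.subset_span ⟨d, hd, rfl⟩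
    have hfactor : (Ideal.Quotient.mkₐ R J).comp (MonoidAlgebra.lift R O G χ)
        = (MonoidAlgebra.lift R (O ⧸ J) (G ⧸ D) (QuotientGroup.lift D _ hD)).comp
          (MonoidAlgebra.mapDomainAlgHom R R (QuotientGroup.mk' D)) := by
      ext g
      simp
    rw [Ideal.map_le_iff_le_comap]
    intro x hx
    rw [Ideal.mem_comap, ← Ideal.Quotient.eq_zero_iff_mem]
    have hx0 : MonoidAlgebra.mapDomainAlgHom R R (QuotientGroup.mk' D) x = 0 := hx
    simpa [hx0] using DFunLike.congr_fun hfactor x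
  · rw [Ideal.span_le]
    rintro _ ⟨d, hd, rfl⟩
    have hmem : MonoidAlgebra.of R G d - 1 ∈ kerIdealR R D := by
      rw [kerIdealR, RingHom.mem_ker, map_sub, map_one, MonoidAlgebra.mapDomainRingHom_apply,
        MonoidAlgebra.of_apply, MonoidAlgebra.mapDomain_single, QuotientGroup.mk'_apply,
        (QuotientGroup.eq_one_iff d).mpr hd, MonoidAlgebra.one_def, sub_self]
    simpa using Ideal.mem_map_of_mem (MonoidAlgebra.lift R O G χ).toRingHom hmem

end

section

variable {R : Type} [CommRing R] {G : Type} [CommGroup G] [Fintype G] {s : ℕ} (σ : Fin s → G)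

theorem ZidealR_self_eq_top : ZidealR R σ s = ⊤ :=
  (Ideal.eq_top_iff_one _).mpr (Ideal.subset_span ⟨∅, by simp, by simp⟩)

theorem map_ZidealR_le_pow {S : Type} [CommRing S] (f : MonoidAlgebra R G →+* S) {K : Ideal S}
    (hν : ∀ l, f (nuElt R (Subgroup.zpowers (σ l))) ∈ K) (i : ℕ) :
    (ZidealR R σ i).map f ≤ K ^ (s - i) := by
  rw [ZidealR, Ideal.map_span, Ideal.span_le]
  rintro _ ⟨_, ⟨T, hT, rfl⟩, rfl⟩
  rw [map_prod, ← hT, ← Finset.prod_const]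
  exact Ideal.prod_mem_prod fun l _ => hν l

theorem map_sum_ZidealR_mul_pow {S : Type} [CommRing S] (f : MonoidAlgebra R G →+* S)
    (J : Ideal (MonoidAlgebra R G)) (hs : s ≠ 0)
    (hν : ∀ l, f (nuElt R (Subgroup.zpowers (σ l))) ∈ J.map f) :
    (∑ i ∈ range s, ZidealR R σ (i + 1) * J ^ i).map f = J.map f ^ (s - 1) := by
  have hmap := map_sum (Ideal.mapHom f) (fun i => ZidealR R σ (i + 1) * J ^ i) (range s)
  simp only [Ideal.mapHom_apply, Ideal.map_mul, Ideal.map_pow] at hmap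
  rw [hmap]
  apply le_antisymm
  · refine Finset.sum_induction _ (· ≤ _) (fun _ _ => sup_le) bot_le fun i hi => ?_
    calc (ZidealR R σ (i + 1)).map f * J.map f ^ i
        ≤ J.map f ^ (s - (i + 1)) * J.map f ^ i :=
          Ideal.mul_mono_left (map_ZidealR_le_pow σ f hν _)
      _ = J.map f ^ (s - 1) := by rw [← pow_add]; congr 1; grind
  · have hlast : s - 1 ∈ range s := Finset.mem_range.mpr (by omega)
    refine le_trans ?_ (Finset.single_le_sum (fun _ _ => bot_le) hlast)
    rw [Nat.sub_add_cancel (Nat.one_le_iff_ne_zero.mpr hs), ZidealR_self_eq_top, Ideal.map_top,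
      ← Ideal.one_eq_top, one_mul]

end

section

variable {G : Type} [CommGroup G] {I : Subgroup G} {s : ℕ} {σ : Fin s → G}

theorem IsDecomp.card_eq_prod_orderOf (hdec : IsDecomp I σ) : Nat.card I = ∏ l, orderOf (σ l) := by
  have hmem (x : ∀ l, Subgroup.zpowers (σ l)) : ∏ l, (x l : G) ∈ I :=
    I.prod_mem fun l _ => Subgroup.zpowers_le.mpr (hdec.1 l) (x l).2
  have hbij : Function.Bijective fun x => (⟨∏ l, (x l : G), hmem x⟩ : I) := by
    refine ⟨fun x y hxy => ?_, fun g => ?_⟩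
    · obtain ⟨z, -, huniq⟩ := hdec.2 _ (hmem y)
      exact (huniq x (congrArg Subtype.val hxy)).trans (huniq y rfl).symm
    · obtain ⟨x, hx, -⟩ := hdec.2 g g.2
      exact ⟨x, Subtype.ext hx⟩
  rw [← Nat.card_eq_of_bijective _ hbij, Nat.card_pi]
  simp_rw [Nat.card_zpowers]

theorem IsDecomp.ne_zero (hdec : IsDecomp I σ) (hI : I ≠ ⊥) : s ≠ 0 := by
  rintro rfl
  exact hI (Subgroup.card_eq_one.mp (by simpa using hdec.card_eq_prod_orderOf))

theorem IsDecomp.natCast_card_mem_pow {O : Type} [CommRing O] (hdec : IsDecomp I σ) {K : Ideal O}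
    (hK : ∀ l, (orderOf (σ l) : O) ∈ K) : (Nat.card I : O) ∈ K ^ s := by
  simpa [hdec.card_eq_prod_orderOf] using
    Ideal.prod_mem_prod (s := univ) (I := fun _ => K) fun l _ => hK l

end

theorem span_image_sub_one_eq_span_singleton {O : Type} [CommRing O] {G : Type} [CommGroup G]
    [Finite G] (χ : G →* O) {I D : Subgroup G} {φt : G} (hφt : φt ∈ D)
    (hφgen : ∀ d ∈ D, ∃ n : ℤ, φt ^ n * d⁻¹ ∈ I) (hI : ∀ g ∈ I, χ g = 1) :
    Ideal.span ((fun d => χ d - 1) '' D) = Ideal.span {χ φt - 1} := by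
  refine le_antisymm ?_ (Ideal.span_mono (by simpa using ⟨φt, hφt, rfl⟩))
  rw [Ideal.span_le]
  rintro _ ⟨d, hd, rfl⟩
  obtain ⟨n, hn⟩ := hφgen d hd
  obtain ⟨m, hm : φt ^ m = φt ^ n⟩ :=
    mem_powers_iff_mem_zpowers.mpr (Subgroup.zpow_mem_zpowers φt n)
  have hχd : χ d = χ φt ^ m := by
    rw [← map_pow, hm, ← mul_one (χ d), ← hI _ hn, ← map_mul, mul_inv_cancel_comm_assoc]
  rw [SetLike.mem_coe, Ideal.mem_span_singleton]
  dsimp only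
  rw [hχd]
  exact sub_one_dvd_pow_sub_one _ m

theorem statement18_general (p : ℕ) [Fact p.Prime]
    {G : Type} [CommGroup G] [Fintype G] (I D : Subgroup G) (hID : I ≤ D)
    (φt : G) (hφt : φt ∈ D) (hφgen : ∀ d ∈ D, ∃ n : ℤ, φt ^ n * d⁻¹ ∈ I)
    (hD : IsPGroup p ↥D) (hInontriv : I ≠ ⊥)
    {s : ℕ} (σ : Fin s → G) (hdec : IsDecomp I σ) (hnt : ∀ l, σ l ≠ 1)
    (O : Type) [CommRing O] [IsDomain O] [Algebra ℤ_[p] O]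
    (ψ : G →* Oˣ) (hψD : ∃ d ∈ D, ψ d ≠ 1) :
    Ideal.span {(MonoidAlgebra.lift ℤ_[p] O G ((Units.coeHom O).comp ψ))
          ((Nat.card I : MonoidAlgebra ℤ_[p] G) * nuElt ℤ_[p] I)} +
      Ideal.span {(MonoidAlgebra.lift ℤ_[p] O G ((Units.coeHom O).comp ψ))
          ((Nat.card I : MonoidAlgebra ℤ_[p] G)
            - nuElt ℤ_[p] I * MonoidAlgebra.of ℤ_[p] G φt⁻¹)} *
        Ideal.map (MonoidAlgebra.lift ℤ_[p] O G ((Units.coeHom O).comp ψ)).toRingHom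
          (∑ i ∈ Finset.range s, ZidealR ℤ_[p] σ (i + 1) * (kerIdealR ℤ_[p] D) ^ i)
    = (Ideal.map (MonoidAlgebra.lift ℤ_[p] O G ((Units.coeHom O).comp ψ)).toRingHom
          (kerIdealR ℤ_[p] D)) ^ (s - 1) *
        Ideal.span {(MonoidAlgebra.lift ℤ_[p] O G ((Units.coeHom O).comp ψ))
          ((Nat.card I : MonoidAlgebra ℤ_[p] G)
            - nuElt ℤ_[p] I * MonoidAlgebra.of ℤ_[p] G φt⁻¹)} := by
  set χ := (Units.coeHom O).comp ψ
  set K := (kerIdealR ℤ_[p] D).map (MonoidAlgebra.lift ℤ_[p] O G χ).toRingHom with hKdef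
  have hK : K = Ideal.span ((fun d => χ d - 1) '' D) := map_lift_kerIdealR χ D
  have hpK : (p : O) ∈ K := by
    obtain ⟨d, hd, hψd⟩ := hψD
    rw [hK]
    refine Ideal.mem_of_dvd _ (hD.sub_one_dvd_prime χ hd ?_) (Ideal.subset_span ⟨d, hd, rfl⟩)
    simpa [χ] using hψd
  have horderK (l : Fin s) : (orderOf (σ l) : O) ∈ K :=
    hD.natCast_orderOf_mem hpK (hID (hdec.1 l)) (hnt l)
  have hs := hdec.ne_zero hInontriv
  rw [map_sum_ZidealR_mul_pow σ _ _ hs fun l =>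
    lift_nuElt_mem χ _ (by rw [Nat.card_zpowers]; exact horderK l), ← hKdef]
  by_cases hI : ∀ g ∈ I, χ g = 1
  · set b := 1 - χ φt⁻¹
    have hKb : K = Ideal.span {b} := by
      rw [hK, span_image_sub_one_eq_span_singleton χ hφt hφgen hI]
      exact Ideal.span_singleton_eq_span_singleton.mpr ⟨(ψ φt)⁻¹, by simp [χ, b, sub_mul]⟩
    have hbcard : b ^ s ∣ (Nat.card I : O) := by
      simpa [hKb, Ideal.span_singleton_pow, Ideal.mem_span_singleton] using
        hdec.natCast_card_mem_pow horderK
    rw [map_mul, map_sub, map_mul, map_natCast, lift_nuElt_eq_card χ hI, MonoidAlgebra.lift_of,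
      show (Nat.card I : O) - Nat.card I * χ φt⁻¹ = Nat.card I * b by ring, hKb]
    exact span_mul_self_add_span_mul_pow_eq hs hbcard
  · push Not at hI
    rw [map_mul, map_sub, map_mul, lift_nuElt_eq_zero χ hI]
    simp [mul_comm]

/-- for `p` an odd prime, `D` a `p`-group, `I` nontrivial decomposed into
nontrivial cyclic subgroups `⟨σ l⟩` (`s` the `p`-rank of `I`), and `ψ` a character of
`G` nontrivial on `D` whose restriction to the maximal subgroup `G'` of order prime to
`p` (i.e. to `{g : G | (orderOf g).Coprime p}`) is injective, with values in (the units
of) the domain `O_ψ = ℤ_p[ψ(G)]`, one has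
`(ψ(#I·ν_I)) + ψ(#I − ν_I·φ̃⁻¹)·ψ(𝓙) = ψ(𝓘_D)^{s−1}·(ψ(#I − ν_I·φ̃⁻¹))` as ideals of
`O_ψ`.  (This is `ψ(𝓐) = ψ(𝓘_D)^{s−1}·ψ(𝓑)` with denominators cleared by `#I`.) -/
theorem statement18 (p : ℕ) [Fact p.Prime] (hp2 : p ≠ 2)
    {G : Type} [CommGroup G] [Fintype G] (I D : Subgroup G) (hID : I ≤ D)
    (φt : G) (hφt : φt ∈ D) (hφgen : ∀ d ∈ D, ∃ n : ℤ, φt ^ n * d⁻¹ ∈ I)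
    (hD : IsPGroup p ↥D) (hInontriv : I ≠ ⊥)
    {s : ℕ} (σ : Fin s → G) (hdec : IsDecomp I σ) (hnt : ∀ l, σ l ≠ 1)
    (O : Type) [CommRing O] [IsDomain O] [Algebra ℤ_[p] O]
    (ψ : G →* Oˣ) (hψD : ∃ d ∈ D, ψ d ≠ 1)
    (hψG' : Set.InjOn ψ {g : G | (orderOf g).Coprime p})
    (hadj : Algebra.adjoin ℤ_[p] (Set.range fun g : G => ((ψ g : Oˣ) : O)) = ⊤) :
    Ideal.span {(MonoidAlgebra.lift ℤ_[p] O G ((Units.coeHom O).comp ψ))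
          ((Nat.card I : MonoidAlgebra ℤ_[p] G) * nuElt ℤ_[p] I)} +
      Ideal.span {(MonoidAlgebra.lift ℤ_[p] O G ((Units.coeHom O).comp ψ))
          ((Nat.card I : MonoidAlgebra ℤ_[p] G)
            - nuElt ℤ_[p] I * MonoidAlgebra.of ℤ_[p] G φt⁻¹)} *
        Ideal.map (MonoidAlgebra.lift ℤ_[p] O G ((Units.coeHom O).comp ψ)).toRingHom
          (∑ i ∈ Finset.range s, ZidealR ℤ_[p] σ (i + 1) * (kerIdealR ℤ_[p] D) ^ i)
    = (Ideal.map (MonoidAlgebra.lift ℤ_[p] O G ((Units.coeHom O).comp ψ)).toRingHom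
          (kerIdealR ℤ_[p] D)) ^ (s - 1) *
        Ideal.span {(MonoidAlgebra.lift ℤ_[p] O G ((Units.coeHom O).comp ψ))
          ((Nat.card I : MonoidAlgebra ℤ_[p] G)
            - nuElt ℤ_[p] I * MonoidAlgebra.of ℤ_[p] G φt⁻¹)} :=
  statement18_general p I D hID φt hφt hφgen hD hInontriv σ hdec hnt O ψ hψD
end

section
/- Let p be an odd prime, G' the maximal subgroup of G of order prime to p, and χ : G' → \bar{ℚ}_p^× an injective (faithful) character; let O_χ = ℤ_p[χ(G')], regarded as a ℤ_p[G']-algebra via χ, and set ℤ_p[G]^χ = ℤ_p[G] ⊗_{ℤ_p[G']} O_χ; for x ∈ ℤ_p[G] write x^χ for its image in ℤ_p[G]^χ. Assume D is not a p-group. Then in ℤ_p[G]^χ, the ideal generated by (#I·ν_I)^χ together with the elements ((#I − ν_I·φ̃^{-1})·j)^χ for j ∈ 𝓙 equals the principal ideal generated by (#I − ν_I·φ̃^{-1})^χ. (This is Lemma 5.1 of the paper, 𝓐^χ = 𝓑^χ for 𝓐 = h·SFitt¹_{ℤ_p[G]}(A⊗ℤ_p) and 𝓑 = (1 − (ν_I/#I)φ^{-1}),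 with 𝓐 expressed via Theorem 1.3 and denominators cleared by multiplying by #I.) -/
open MonoidAlgebra Finset

open scoped TensorProduct

/-!
Write `π(x) = x^χ` and `θ = #I − ν_I φ̃⁻¹`. As `χ` is faithful and orders prime to `p` are
invertible in the domain `O_χ`, `π(g) − 1` is a unit for every `g ≠ 1` of order prime to `p`,
hence (passing to a `p`-power of `g`) for every `g` that is not of `p`-power order.

If `I` is a `p`-group, `φ̃` is not of `p`-power order (otherwise `D ≤ I · ⟨φ̃⟩` would be a
`p`-group), and `#I·ν_I·(1 − φ̃⁻¹) = θ·ν_I` puts `(#I·ν_I)^χ` into `(θ^χ)`. Otherwise some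
`g ∈ I` is not of `p`-power order, and `ν_I·(g − 1) = 0` forces `ν_I^χ = 0`.

Conversely, for `δ ∈ D` not of `p`-power order, `(δ − 1)^{s−1} ∈ Z_s 𝓘_D^{s−1} ⊆ 𝓙` maps to a
unit, so `θ^χ` is a multiple of `(θ·(δ − 1)^{s−1})^χ`; when `s = 0`, `I` is trivial and
`(#I·ν_I)^χ = 1`.
-/

section Groups

variable {p : ℕ} {G : Type*} [Group G]

lemma exists_pow_prime_pow_ne_one_coprime [Fact p.Prime] {g : G} (hg : IsOfFinOrder g)
    (h : ∀ k : ℕ, g ^ p ^ k ≠ 1) :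
    ∃ e : ℕ, g ^ p ^ e ≠ 1 ∧ (orderOf (g ^ p ^ e)).Coprime p := by
  refine ⟨(orderOf g).factorization p, h _, ?_⟩
  rw [orderOf_pow_of_dvd (pow_ne_zero _ (Fact.out : p.Prime).ne_zero) (Nat.ordProj_dvd _ _)]
  exact (Nat.coprime_ordCompl Fact.out hg.orderOf_pos.ne').symm

lemma exists_mem_forall_pow_ne_one_of_not_isPGroup {H : Subgroup G} (h : ¬IsPGroup p H) :
    ∃ g ∈ H, ∀ k : ℕ, g ^ p ^ k ≠ 1 := by
  simp only [IsPGroup, not_forall, not_exists] at h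
  obtain ⟨⟨g, hg⟩, hk⟩ := h
  exact ⟨g, hg, fun k hgk => hk k (Subtype.ext hgk)⟩

lemma isPGroup_zpowers_of_pow_eq_one [Fact p.Prime] {φ : G} {k : ℕ} (hφ : φ ^ p ^ k = 1) :
    IsPGroup p (Subgroup.zpowers φ) := by
  obtain ⟨m, -, hm⟩ := (Nat.dvd_prime_pow Fact.out).mp (orderOf_dvd_of_pow_eq_one hφ)
  exact IsPGroup.of_card ((Nat.card_zpowers φ).trans hm)

lemma le_sup_zpowers_of_forall_zpow_mul_inv_mem {I D : Subgroup G} {φ : G}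
    (h : ∀ d ∈ D, ∃ n : ℤ, φ ^ n * d⁻¹ ∈ I) : D ≤ I ⊔ Subgroup.zpowers φ := by
  intro d hd
  obtain ⟨n, hn⟩ := h d hd
  rw [show d = (φ ^ n * d⁻¹)⁻¹ * φ ^ n by group]
  exact mul_mem (inv_mem (Subgroup.mem_sup_left hn))
    (Subgroup.mem_sup_right (Subgroup.zpow_mem_zpowers φ n))

lemma IsPGroup.of_le_sup_zpowers {G : Type*} [CommGroup G] [Fact p.Prime]
    {I D : Subgroup G} {φ : G} {k : ℕ} (hI : IsPGroup p I) (hφ : φ ^ p ^ k = 1)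
    (hD : D ≤ I ⊔ Subgroup.zpowers φ) : IsPGroup p D :=
  (hI.to_sup_of_normal_right (isPGroup_zpowers_of_pow_eq_one hφ)).to_le hD

lemma IsDecomp.eq_bot {G : Type} [CommGroup G] {I : Subgroup G} {σ : Fin 0 → G}
    (h : IsDecomp I σ) : I = ⊥ := by
  refine (Subgroup.eq_bot_iff_forall I).mpr fun g hg => ?_
  obtain ⟨x, hx, -⟩ := h.2 g hg
  simpa using hx.symm

end Groups

section RootsOfUnity

variable {O : Type*} [CommRing O] [IsDomain O]

lemma isUnit_sub_one_of_pow_eq_one {ζ : O} {m : ℕ} (hm : IsUnit (m : O)) (hζm : ζ ^ m = 1)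
    (hζ : ζ ≠ 1) : IsUnit (ζ - 1) := by
  have hgeom : ∑ k ∈ range m, ζ ^ k = 0 := by
    have h := mul_geom_sum ζ m
    rw [hζm, sub_self] at h
    exact (mul_eq_zero.mp h).resolve_left (sub_ne_zero.mpr hζ)
  have hm_eq : (m : O) = ∑ k ∈ range m, (1 - ζ ^ k) := by
    rw [sum_sub_distrib, hgeom]
    simp
  refine isUnit_of_dvd_unit ?_ hm
  rw [hm_eq]
  exact dvd_sum fun k _ => dvd_sub_comm.mp (sub_one_dvd_pow_sub_one ζ k)

variable {p : ℕ} [Fact p.Prime] [Algebra ℤ_[p] O]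

lemma isUnit_sub_one_of_pow_eq_one_of_coprime {ζ : O} {m : ℕ} (hm : m.Coprime p)
    (hζm : ζ ^ m = 1) (hζ : ζ ≠ 1) : IsUnit (ζ - 1) := by
  refine isUnit_sub_one_of_pow_eq_one ?_ hζm hζ
  have hmZ : IsUnit (m : ℤ_[p]) :=
    PadicInt.isUnit_iff.mpr (PadicInt.norm_natCast_eq_one_iff.mpr hm.symm)
  simpa using hmZ.map (algebraMap ℤ_[p] O)

lemma isUnit_val_sub_one_of_injective {H : Type*} [Group H] [Finite H] {χ : H →* Oˣ}
    (hχ : Function.Injective χ) {x : H} (hx : x ≠ 1) (hcop : (orderOf x).Coprime p) :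
    IsUnit ((χ x : O) - 1) :=
  isUnit_sub_one_of_pow_eq_one_of_coprime hcop
    (by rw [← Units.val_pow_eq_pow_val, ← map_pow, pow_orderOf_eq_one, map_one, Units.val_one])
    (by rwa [Ne, Units.val_eq_one, map_eq_one_iff χ hχ])

end RootsOfUnity

section GroupAlgebra

variable {R : Type} [CommRing R] {G : Type} [CommGroup G] [Fintype G]

open scoped Classical in
lemma nuElt_eq_sum_subtype (H : Subgroup G) : nuElt R H = ∑ h : H, of R G h :=
  sum_subtype _ (by simp) _

lemma nuElt_mul_of {H : Subgroup G} {g : G} (hg : g ∈ H) :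
    nuElt R H * of R G g = nuElt R H := by
  classical
  simp only [nuElt_eq_sum_subtype, sum_mul, ← map_mul]
  exact Fintype.sum_equiv (Equiv.mulRight ⟨g, hg⟩) _ _ fun _ => rfl

lemma nuElt_mul_self (H : Subgroup G) :
    nuElt R H * nuElt R H = (Nat.card H : MonoidAlgebra R G) * nuElt R H := by
  classical
  calc nuElt R H * nuElt R H = ∑ h : H, nuElt R H * of R G h := by
        rw [← mul_sum, ← nuElt_eq_sum_subtype]
    _ = ∑ _h : H, nuElt R H := sum_congr rfl fun h _ => nuElt_mul_of h.2
    _ = (Nat.card H : MonoidAlgebra R G) * nuElt R H := by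
        rw [sum_const, card_univ, nsmul_eq_mul, Nat.card_eq_fintype_card]

lemma nuElt_bot : nuElt R (⊥ : Subgroup G) = 1 := by
  classical
  rw [nuElt, show univ.filter (· ∈ (⊥ : Subgroup G)) = {1} by ext; simp, sum_singleton, map_one]

lemma of_sub_one_mem_kerIdealR {D : Subgroup G} {d : G} (hd : d ∈ D) :
    of R G d - 1 ∈ kerIdealR R D := by
  rw [kerIdealR, RingHom.mem_ker, map_sub, map_one, sub_eq_zero]
  simp [(QuotientGroup.eq_one_iff d).mpr hd, MonoidAlgebra.one_def]

lemma ZidealR_eq_top {s : ℕ} (σ : Fin s → G) {i : ℕ} (hi : s ≤ i) : ZidealR R σ i = ⊤ :=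
  (Ideal.eq_top_iff_one _).mpr <|
    Ideal.subset_span ⟨∅, by simp [Nat.sub_eq_zero_of_le hi], by simp⟩

end GroupAlgebra

lemma isUnit_sub_one_of_forall_pow_ne_one {p : ℕ} [Fact p.Prime] {G : Type*} [Group G]
    [Finite G] {T : Type*} [CommRing T] (ψ : G →* T)
    (hψ : ∀ g : G, g ≠ 1 → (orderOf g).Coprime p → IsUnit (ψ g - 1)) {g : G}
    (hg : ∀ k : ℕ, g ^ p ^ k ≠ 1) : IsUnit (ψ g - 1) := by
  obtain ⟨e, hne, hcop⟩ := exists_pow_prime_pow_ne_one_coprime (isOfFinOrder_of_finite g) hg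
  refine isUnit_of_dvd_unit (sub_one_dvd_pow_sub_one _ (p ^ e)) ?_
  rw [← map_pow]
  exact hψ _ hne hcop

section ChiPart

variable {p : ℕ} [Fact p.Prime] {R : Type} [CommRing R] {G : Type} [CommGroup G] [Fintype G]
  {T : Type*} [CommRing T] (π : MonoidAlgebra R G →+* T)

lemma isUnit_map_of_sub_one_of_forall_pow_ne_one
    (hπ : ∀ g : G, g ≠ 1 → (orderOf g).Coprime p → IsUnit (π (of R G g) - 1)) {g : G}
    (hg : ∀ k : ℕ, g ^ p ^ k ≠ 1) :
    IsUnit (π (of R G g) - 1) :=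
  isUnit_sub_one_of_forall_pow_ne_one ((π : MonoidAlgebra R G →* T).comp (of R G)) hπ hg

lemma map_nuElt_eq_zero {H : Subgroup G} {g : G} (hg : g ∈ H)
    (hu : IsUnit (π (of R G g) - 1)) :
    π (nuElt R H) = 0 := by
  refine hu.mul_left_eq_zero.mp ?_
  rw [mul_sub, mul_one, ← map_mul, nuElt_mul_of hg, sub_self]

lemma map_sub_nuElt_mul_dvd_map_natCard_mul_nuElt
    (hπ : ∀ g : G, g ≠ 1 → (orderOf g).Coprime p → IsUnit (π (of R G g) - 1))
    {I D : Subgroup G} {φ : G} (hD : D ≤ I ⊔ Subgroup.zpowers φ) (hDp : ¬IsPGroup p D) :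
    π (Nat.card I - nuElt R I * of R G φ⁻¹) ∣ π (Nat.card I * nuElt R I) := by
  by_cases hI : IsPGroup p I
  · have hφ : ∀ k : ℕ, φ⁻¹ ^ p ^ k ≠ 1 := fun k hk =>
      hDp (hI.of_le_sup_zpowers (inv_eq_one.mp ((inv_pow φ _).symm.trans hk)) hD)
    have hu : IsUnit (π (1 - of R G φ⁻¹)) := by
      simpa [neg_sub] using (isUnit_map_of_sub_one_of_forall_pow_ne_one π hπ hφ).neg
    have key : Nat.card I * nuElt R I * (1 - of R G φ⁻¹)
        = (Nat.card I - nuElt R I * of R G φ⁻¹) * nuElt R I := by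
      linear_combination (of R G φ⁻¹) * nuElt_mul_self (R := R) I
    rw [← hu.dvd_mul_right, ← map_mul, key, map_mul]
    exact dvd_mul_right _ _
  · obtain ⟨g, hgI, hg⟩ := exists_mem_forall_pow_ne_one_of_not_isPGroup hI
    rw [map_mul, map_nuElt_eq_zero π hgI
      (isUnit_map_of_sub_one_of_forall_pow_ne_one π hπ hg), mul_zero]
    exact dvd_zero _

lemma exists_mem_isUnit_map
    (hπ : ∀ g : G, g ≠ 1 → (orderOf g).Coprime p → IsUnit (π (of R G g) - 1))
    {s : ℕ} (σ : Fin s → G) (hs : s ≠ 0) {D : Subgroup G} (hDp : ¬IsPGroup p D) :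
    ∃ j ∈ ∑ i ∈ range s, ZidealR R σ (i + 1) * kerIdealR R D ^ i, IsUnit (π j) := by
  obtain ⟨δ, hδD, hδ⟩ := exists_mem_forall_pow_ne_one_of_not_isPGroup hDp
  obtain ⟨s, rfl⟩ := Nat.exists_eq_succ_of_ne_zero hs
  refine ⟨(of R G δ - 1) ^ s, ?_, ?_⟩
  · rw [sum_range_succ, Submodule.add_eq_sup, ZidealR_eq_top σ le_rfl, Ideal.top_mul]
    exact Submodule.mem_sup_right (Ideal.pow_mem_pow (of_sub_one_mem_kerIdealR hδD) s)
  · rw [map_pow, map_sub, map_one]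
    exact (isUnit_map_of_sub_one_of_forall_pow_ne_one π hπ hδ).pow s

theorem span_map_natCard_mul_nuElt_union_eq_span_singleton
    (hπ : ∀ g : G, g ≠ 1 → (orderOf g).Coprime p → IsUnit (π (of R G g) - 1))
    {I D : Subgroup G} {φ : G} (hD : D ≤ I ⊔ Subgroup.zpowers φ) (hDp : ¬IsPGroup p D)
    {s : ℕ} {σ : Fin s → G} (hdec : IsDecomp I σ) :
    Ideal.span ({π (Nat.card I * nuElt R I)} ∪
        {y | ∃ j ∈ ∑ i ∈ range s, ZidealR R σ (i + 1) * kerIdealR R D ^ i,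
          y = π ((Nat.card I - nuElt R I * of R G φ⁻¹) * j)})
      = Ideal.span {π (Nat.card I - nuElt R I * of R G φ⁻¹)} := by
  set θ : MonoidAlgebra R G := Nat.card I - nuElt R I * of R G φ⁻¹
  apply le_antisymm
  · rw [Ideal.span_le]
    rintro _ (rfl | ⟨j, -, rfl⟩) <;> rw [SetLike.mem_coe, Ideal.mem_span_singleton]
    · exact map_sub_nuElt_mul_dvd_map_natCard_mul_nuElt π hπ hD hDp
    · exact ⟨π j, map_mul π θ j⟩
  rw [Ideal.span_singleton_le_iff_mem]
  rcases eq_or_ne s 0 with rfl | hs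
  · have h1 : π (Nat.card I * nuElt R I) = 1 := by
      rw [hdec.eq_bot, Subgroup.card_bot, nuElt_bot, Nat.cast_one, one_mul, map_one]
    rw [← mul_one (π θ), ← h1]
    exact Ideal.mul_mem_left _ _ (Ideal.subset_span (Or.inl rfl))
  · obtain ⟨j, hj, u, hu⟩ := exists_mem_isUnit_map π hπ σ hs hDp
    have hθ : π θ = π (θ * j) * ↑u⁻¹ := by
      rw [map_mul, ← hu, mul_assoc, Units.mul_inv, mul_one]
    rw [hθ]
    exact Ideal.mul_mem_right _ _ (Ideal.subset_span (Or.inr ⟨j, hj, rfl⟩))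

end ChiPart

theorem statement19_general (p : ℕ) [Fact p.Prime]
    {G : Type} [CommGroup G] [Fintype G]
    (G' : Subgroup G) (hG' : ∀ g : G, g ∈ G' ↔ (orderOf g).Coprime p)
    (I D : Subgroup G)
    (φt : G) (hφgen : ∀ d ∈ D, ∃ n : ℤ, φt ^ n * d⁻¹ ∈ I)
    {s : ℕ} (σ : Fin s → G) (hdec : IsDecomp I σ)
    (hDnotp : ¬ IsPGroup p ↥D)
    (O : Type) [CommRing O] [IsDomain O] [Algebra ℤ_[p] O]
    (χ : ↥G' →* Oˣ) (hχinj : Function.Injective χ) :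
    letI : Algebra (MonoidAlgebra ℤ_[p] ↥G') (MonoidAlgebra ℤ_[p] G) :=
      (MonoidAlgebra.mapDomainRingHom ℤ_[p] G'.subtype).toAlgebra
    letI : Algebra (MonoidAlgebra ℤ_[p] ↥G') O :=
      ((MonoidAlgebra.lift ℤ_[p] O ↥G' ((Units.coeHom O).comp χ)).toRingHom).toAlgebra
    Ideal.span
        (({((Nat.card I : MonoidAlgebra ℤ_[p] G) * nuElt ℤ_[p] I)
            ⊗ₜ[MonoidAlgebra ℤ_[p] ↥G'] (1 : O)} :
          Set ((MonoidAlgebra ℤ_[p] G) ⊗[MonoidAlgebra ℤ_[p] ↥G'] O)) ∪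
          {y | ∃ j ∈ (∑ i ∈ Finset.range s,
              ZidealR ℤ_[p] σ (i + 1) * (kerIdealR ℤ_[p] D) ^ i :
                Ideal (MonoidAlgebra ℤ_[p] G)),
            y = (((Nat.card I : MonoidAlgebra ℤ_[p] G)
                - nuElt ℤ_[p] I * MonoidAlgebra.of ℤ_[p] G φt⁻¹) * j)
              ⊗ₜ[MonoidAlgebra ℤ_[p] ↥G'] (1 : O)})
      = Ideal.span {((Nat.card I : MonoidAlgebra ℤ_[p] G)
            - nuElt ℤ_[p] I * MonoidAlgebra.of ℤ_[p] G φt⁻¹)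
          ⊗ₜ[MonoidAlgebra ℤ_[p] ↥G'] (1 : O)} := by
  let : Algebra (MonoidAlgebra ℤ_[p] ↥G') (MonoidAlgebra ℤ_[p] G) :=
    (MonoidAlgebra.mapDomainRingHom ℤ_[p] G'.subtype).toAlgebra
  let : Algebra (MonoidAlgebra ℤ_[p] ↥G') O :=
    ((MonoidAlgebra.lift ℤ_[p] O ↥G' ((Units.coeHom O).comp χ)).toRingHom).toAlgebra
  let π := Algebra.TensorProduct.includeLeftRingHom (R := MonoidAlgebra ℤ_[p] ↥G')
    (A := MonoidAlgebra ℤ_[p] G) (B := O)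
  have hπ : ∀ g : G, g ≠ 1 → (orderOf g).Coprime p → IsUnit (π (of ℤ_[p] G g) - 1) := by
    intro g hg hcop
    have hgG' := (hG' g).mpr hcop
    have hπg : π (of ℤ_[p] G g)
        = Algebra.TensorProduct.includeRight (R := MonoidAlgebra ℤ_[p] ↥G')
          (A := MonoidAlgebra ℤ_[p] G) ((χ ⟨g, hgG'⟩ : Oˣ) : O) := by
      have := Algebra.TensorProduct.tmul_one_eq_one_tmul (A := MonoidAlgebra ℤ_[p] G) (B := O)
        (of ℤ_[p] ↥G' ⟨g, hgG'⟩)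
      simpa [π, RingHom.algebraMap_toAlgebra] using this
    rw [hπg, ← map_one (Algebra.TensorProduct.includeRight (R := MonoidAlgebra ℤ_[p] ↥G')
      (A := MonoidAlgebra ℤ_[p] G) (B := O)), ← map_sub]
    refine (isUnit_val_sub_one_of_injective (p := p) hχinj (x := ⟨g, hgG'⟩) ?_ ?_).map _
    · exact fun h => hg (congrArg Subtype.val h)
    · rwa [Subgroup.orderOf_mk]
  exact span_map_natCard_mul_nuElt_union_eq_span_singleton π hπ
    (le_sup_zpowers_of_forall_zpow_mul_inv_mem hφgen) hDnotp hdec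

/-- for `p` an odd prime, `G'` the maximal subgroup of `G` of order prime
to `p`, `χ` an injective (faithful) character of `G'` with values in (the units of) the
domain `O_χ = ℤ_p[χ(G')]`, and `ℤ_p[G]^χ = ℤ_p[G] ⊗_{ℤ_p[G']} O_χ` (with `x^χ = x ⊗ 1`),
if `D` is not a `p`-group then the ideal of `ℤ_p[G]^χ` generated by `(#I·ν_I)^χ`
together with the elements `((#I − ν_I·φ̃⁻¹)·j)^χ`, `j ∈ 𝓙`, equals the principal ideal
generated by `(#I − ν_I·φ̃⁻¹)^χ`.  (This is `𝓐^χ = 𝓑^χ` with denominators cleared by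
`#I`.) -/
theorem statement19 (p : ℕ) [Fact p.Prime] (hp2 : p ≠ 2)
    {G : Type} [CommGroup G] [Fintype G]
    (G' : Subgroup G) (hG' : ∀ g : G, g ∈ G' ↔ (orderOf g).Coprime p)
    (I D : Subgroup G) (hID : I ≤ D)
    (φt : G) (hφt : φt ∈ D) (hφgen : ∀ d ∈ D, ∃ n : ℤ, φt ^ n * d⁻¹ ∈ I)
    {s : ℕ} (σ : Fin s → G) (hdec : IsDecomp I σ)
    (hDnotp : ¬ IsPGroup p ↥D)
    (O : Type) [CommRing O] [IsDomain O] [Algebra ℤ_[p] O]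
    (χ : ↥G' →* Oˣ) (hχinj : Function.Injective χ)
    (hadj : Algebra.adjoin ℤ_[p] (Set.range fun g : ↥G' => ((χ g : Oˣ) : O)) = ⊤) :
    letI : Algebra (MonoidAlgebra ℤ_[p] ↥G') (MonoidAlgebra ℤ_[p] G) :=
      (MonoidAlgebra.mapDomainRingHom ℤ_[p] G'.subtype).toAlgebra
    letI : Algebra (MonoidAlgebra ℤ_[p] ↥G') O :=
      ((MonoidAlgebra.lift ℤ_[p] O ↥G' ((Units.coeHom O).comp χ)).toRingHom).toAlgebra
    Ideal.span
        (({((Nat.card I : MonoidAlgebra ℤ_[p] G) * nuElt ℤ_[p] I)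
            ⊗ₜ[MonoidAlgebra ℤ_[p] ↥G'] (1 : O)} :
          Set ((MonoidAlgebra ℤ_[p] G) ⊗[MonoidAlgebra ℤ_[p] ↥G'] O)) ∪
          {y | ∃ j ∈ (∑ i ∈ Finset.range s,
              ZidealR ℤ_[p] σ (i + 1) * (kerIdealR ℤ_[p] D) ^ i :
                Ideal (MonoidAlgebra ℤ_[p] G)),
            y = (((Nat.card I : MonoidAlgebra ℤ_[p] G)
                - nuElt ℤ_[p] I * MonoidAlgebra.of ℤ_[p] G φt⁻¹) * j)
              ⊗ₜ[MonoidAlgebra ℤ_[p] ↥G'] (1 : O)})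
      = Ideal.span {((Nat.card I : MonoidAlgebra ℤ_[p] G)
            - nuElt ℤ_[p] I * MonoidAlgebra.of ℤ_[p] G φt⁻¹)
          ⊗ₜ[MonoidAlgebra ℤ_[p] ↥G'] (1 : O)} :=
  statement19_general p G' hG' I D φt hφgen σ hdec hDnotp O χ hχinj
end
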